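/- Let q ∈ (0, 1/2). Then Σ_{n=2}^∞ q^{σ_∞(n)} ≤ q(2−q)/(1−2q), where the sum is over n with σ_∞(n) < ∞ (terms with σ_∞(n) = ∞ contribute 0, using the convention q^∞ = 0). -/
import Mathlib


open Classical
noncomputable section

/-- The reduced Collatz map. -/
def collatzT (n : ℕ) : ℕ := if n % 2 = 1 then (3 * n + 1) / 2 else n / 2

/-- The total stopping time `σ_∞(n) ∈ ℕ ∪ {∞}`: minimal `k` with `T^k(n) = 1`,
`∞` if none, with the convention `σ_∞(0) = 0`. -/
noncomputable def sigmaInf (n : ℕ) : ℕ∞ :=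
  if n = 0 then 0
  else if h : ∃ k : ℕ, collatzT^[k] n = 1 then (Nat.find h : ℕ∞) else ⊤

/-- The term `q^{σ_∞(n)}` for `n ≥ 2`, with `q^∞ = 0`, and `0` for `n < 2`. -/
noncomputable def sigmaTerm (q : ℝ) (n : ℕ) : ℝ :=
  if 2 ≤ n then (if sigmaInf n = ⊤ then 0 else q ^ (sigmaInf n).toNat) else 0

lemma collatzT_pos {n : ℕ} (hn : 1 ≤ n) : 1 ≤ collatzT n := by
  unfold collatzT; split <;> omega

lemma sigmaInf_one : sigmaInf 1 = 0 := by
  have hex : ∃ k : ℕ, collatzT^[k] 1 = 1 := ⟨0, rfl⟩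
  rw [sigmaInf, if_neg one_ne_zero, dif_pos hex]
  have : Nat.find hex = 0 := by
    rw [Nat.find_eq_zero]; rfl
  rw [this]; rfl

lemma sigmaInf_ne_zero {n : ℕ} (hn : 2 ≤ n) : sigmaInf n ≠ 0 := by
  intro h
  rw [sigmaInf, if_neg (by omega : n ≠ 0)] at h
  by_cases hex : ∃ k : ℕ, collatzT^[k] n = 1
  · rw [dif_pos hex] at h
    have h0 : Nat.find hex = 0 := by exact_mod_cast h
    have := Nat.find_spec hex
    rw [h0] at this
    simp only [Function.iterate_zero, id_eq] at this
    omega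
  · rw [dif_neg hex] at h
    exact (ENat.top_ne_zero) h

lemma sigmaInf_step {n k : ℕ} (hn : 2 ≤ n) (h : sigmaInf n = ((k + 1 : ℕ) : ℕ∞)) :
    sigmaInf (collatzT n) = (k : ℕ∞) := by
  rw [sigmaInf, if_neg (by omega : n ≠ 0)] at h
  by_cases hex : ∃ j : ℕ, collatzT^[j] n = 1
  · rw [dif_pos hex] at h
    have hfind : Nat.find hex = k + 1 := by exact_mod_cast h
    have h1 : collatzT^[k] (collatzT n) = 1 := by
      have hs := Nat.find_spec hex
      rw [hfind, Function.iterate_succ_apply] at hs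
      exact hs
    have hex2 : ∃ j : ℕ, collatzT^[j] (collatzT n) = 1 := ⟨k, h1⟩
    have hT0 : collatzT n ≠ 0 := by
      have := collatzT_pos (by omega : 1 ≤ n); omega
    rw [sigmaInf, if_neg hT0, dif_pos hex2]
    have : Nat.find hex2 = k := by
      rw [Nat.find_eq_iff]
      refine ⟨h1, fun j hj hc => ?_⟩
      have hc' : collatzT^[j + 1] n = 1 := by
        rw [Function.iterate_succ_apply]; exact hc
      exact Nat.find_min hex (by omega) hc'
    rw [this]
  · rw [dif_neg hex] at h
    exact absurd h.symm (ENat.coe_ne_top (k + 1))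

/-- The set of `n ≥ 1` with total stopping time exactly `k`. -/
def Ck (k : ℕ) : Set ℕ := {n : ℕ | 1 ≤ n ∧ sigmaInf n = (k : ℕ∞)}

lemma Ck_zero : Ck 0 = {1} := by
  ext n
  simp only [Ck, Set.mem_setOf_eq, Set.mem_singleton_iff, Nat.cast_zero]
  constructor
  · rintro ⟨hn, h⟩
    by_contra hne
    exact sigmaInf_ne_zero (by omega) h
  · rintro rfl
    exact ⟨le_refl 1, sigmaInf_one⟩

lemma Ck_succ_subset (k : ℕ) :
    Ck (k + 1) ⊆ (fun m => 2 * m) '' Ck k ∪ (fun m => (2 * m - 1) / 3) '' Ck k := by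
  rintro n ⟨hn1, hσ⟩
  have hne1 : n ≠ 1 := by
    rintro rfl
    rw [sigmaInf_one] at hσ
    exact absurd hσ.symm (by exact_mod_cast Nat.succ_ne_zero k)
  have hn2 : 2 ≤ n := by omega
  have hstep : sigmaInf (collatzT n) = (k : ℕ∞) := sigmaInf_step hn2 (by exact_mod_cast hσ)
  have hm1 : 1 ≤ collatzT n := collatzT_pos (by omega)
  have hmem : collatzT n ∈ Ck k := ⟨hm1, hstep⟩
  by_cases hpar : n % 2 = 1
  · right
    refine ⟨collatzT n, hmem, ?_⟩
    show (2 * collatzT n - 1) / 3 = n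
    have hT : collatzT n = (3 * n + 1) / 2 := by rw [collatzT, if_pos hpar]
    rw [hT]
    omega
  · left
    refine ⟨collatzT n, hmem, ?_⟩
    show 2 * collatzT n = n
    have hT : collatzT n = n / 2 := by rw [collatzT, if_neg hpar]
    rw [hT]
    omega

lemma Ck_finite (k : ℕ) : (Ck k).Finite := by
  induction k with
  | zero => rw [Ck_zero]; exact Set.finite_singleton 1
  | succ k ih =>
    exact Set.Finite.subset ((ih.image _).union (ih.image _)) (Ck_succ_subset k)

lemma Ck_one_subset : Ck 1 ⊆ {2} := by
  intro n hn
  have h1 := hn.1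
  have := Ck_succ_subset 0 hn
  rw [Ck_zero] at this
  simp only [Set.image_singleton, Set.mem_union, Set.mem_singleton_iff] at this
  rcases this with h | h
  · simpa using h
  · exfalso; omega

lemma Ck_card (k : ℕ) : (Ck (k + 1)).ncard ≤ 2 ^ k := by
  induction k with
  | zero =>
    calc (Ck 1).ncard ≤ ({2} : Set ℕ).ncard :=
          Set.ncard_le_ncard Ck_one_subset (Set.finite_singleton 2)
      _ = 1 := Set.ncard_singleton 2
  | succ k ih =>
    have hfin := Ck_finite (k + 1)
    calc (Ck (k + 2)).ncard
        ≤ ((fun m => 2 * m) '' Ck (k + 1) ∪ (fun m => (2 * m - 1) / 3) '' Ck (k + 1)).ncard :=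
          Set.ncard_le_ncard (Ck_succ_subset (k + 1)) ((hfin.image _).union (hfin.image _))
      _ ≤ ((fun m => 2 * m) '' Ck (k + 1)).ncard + ((fun m => (2 * m - 1) / 3) '' Ck (k + 1)).ncard :=
          Set.ncard_union_le _ _
      _ ≤ (Ck (k + 1)).ncard + (Ck (k + 1)).ncard :=
          add_le_add (Set.ncard_image_le hfin) (Set.ncard_image_le hfin)
      _ ≤ 2 ^ k + 2 ^ k := add_le_add ih ih
      _ = 2 ^ (k + 1) := by ring

lemma sigmaTerm_nonneg {q : ℝ} (hq0 : 0 < q) (n : ℕ) : 0 ≤ sigmaTerm q n := by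
  rw [sigmaTerm]
  split
  · split
    · exact le_refl 0
    · positivity
  · exact le_refl 0

lemma finset_sum_bound (q : ℝ) (hq0 : 0 < q) (hq : q < 1 / 2) (F : Finset ℕ) :
    ∑ n ∈ F, sigmaTerm q n ≤ q / (1 - 2 * q) := by
  classical
  have h2q0 : (0 : ℝ) ≤ 2 * q := by linarith
  have h2q1 : 2 * q < 1 := by linarith
  set P : ℕ → Prop := fun n => 2 ≤ n ∧ sigmaInf n ≠ ⊤ with hP
  have hfilter : ∑ n ∈ F.filter P, sigmaTerm q n = ∑ n ∈ F, sigmaTerm q n := by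
    apply Finset.sum_filter_of_ne
    intro n _ hne
    by_contra hPn
    apply hne
    push_neg at hPn
    rw [sigmaTerm]
    by_cases h2 : 2 ≤ n
    · rw [if_pos h2, if_pos (hPn h2)]
    · rw [if_neg h2]
  rw [← hfilter]
  set F' := F.filter P with hF'
  set s : ℕ → ℕ := fun n => (sigmaInf n).toNat with hs
  set K := F'.sup s with hK
  have hmap : ∀ n ∈ F', s n ∈ Finset.range (K + 1) := by
    intro n hn
    rw [Finset.mem_range, Nat.lt_succ_iff]
    exact Finset.le_sup hn
  have hfib := Finset.sum_fiberwise_of_maps_to hmap (sigmaTerm q)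
  rw [← hfib]
  have hterm : ∀ k ∈ Finset.range (K + 1),
      ∑ n ∈ F'.filter (fun n => s n = k), sigmaTerm q n
        ≤ (if k = 0 then 0 else (2 : ℝ) ^ (k - 1) * q ^ k) := by
    intro k _
    rcases Nat.eq_zero_or_pos k with rfl | hkpos
    · rw [if_pos rfl]
      have : F'.filter (fun n => s n = 0) = ∅ := by
        rw [Finset.filter_eq_empty_iff]
        intro n hn h0
        rw [hF', Finset.mem_filter] at hn
        obtain ⟨_, hn2, htop⟩ := hn
        have : sigmaInf n = 0 := by
          rw [← ENat.coe_toNat htop]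
          exact_mod_cast congrArg (Nat.cast : ℕ → ℕ∞) h0
        exact sigmaInf_ne_zero hn2 this
      rw [this, Finset.sum_empty]
    · obtain ⟨j, rfl⟩ : ∃ j, k = j + 1 := ⟨k - 1, by omega⟩
      rw [if_neg (Nat.succ_ne_zero j)]
      have hconst : ∀ n ∈ F'.filter (fun n => s n = j + 1), sigmaTerm q n = q ^ (j + 1) := by
        intro n hn
        rw [Finset.mem_filter, hF', Finset.mem_filter] at hn
        obtain ⟨⟨_, hn2, htop⟩, hsn⟩ := hn
        simp only [hs] at hsn
        rw [sigmaTerm, if_pos hn2, if_neg htop, hsn]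
      rw [Finset.sum_congr rfl hconst, Finset.sum_const, nsmul_eq_mul]
      have hsubset : (↑(F'.filter (fun n => s n = j + 1)) : Set ℕ) ⊆ Ck (j + 1) := by
        intro n hn
        simp only [Finset.coe_filter, Set.mem_setOf_eq] at hn
        obtain ⟨hnF, hsn⟩ := hn
        rw [hF', Finset.mem_filter] at hnF
        obtain ⟨_, hn2, htop⟩ := hnF
        refine ⟨by omega, ?_⟩
        rw [← ENat.coe_toNat htop]
        exact_mod_cast congrArg (Nat.cast : ℕ → ℕ∞) hsn
      have hcard : (F'.filter (fun n => s n = j + 1)).card ≤ 2 ^ j := by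
        have := Set.ncard_le_ncard hsubset (Ck_finite (j + 1))
        rw [Set.ncard_coe_finset] at this
        exact this.trans (Ck_card j)
      have : ((F'.filter (fun n => s n = j + 1)).card : ℝ) ≤ (2 : ℝ) ^ j := by
        calc ((F'.filter (fun n => s n = j + 1)).card : ℝ) ≤ ((2 ^ j : ℕ) : ℝ) := by
              exact_mod_cast hcard
          _ = (2 : ℝ) ^ j := by push_cast; ring
      simpa using mul_le_mul_of_nonneg_right this (by positivity : (0:ℝ) ≤ q ^ (j + 1))
  calc ∑ k ∈ Finset.range (K + 1), ∑ n ∈ F'.filter (fun n => s n = k), sigmaTerm q n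
      ≤ ∑ k ∈ Finset.range (K + 1), (if k = 0 then 0 else (2 : ℝ) ^ (k - 1) * q ^ k) :=
        Finset.sum_le_sum hterm
    _ = ∑ i ∈ Finset.range K, (if i + 1 = 0 then 0 else (2 : ℝ) ^ i * q ^ (i + 1)) + 0 := by
        rw [Finset.sum_range_succ']
        simp
    _ = q * ∑ i ∈ Finset.range K, (2 * q) ^ i := by
        rw [Finset.mul_sum]
        refine (add_zero _).trans (Finset.sum_congr rfl fun i _ => ?_)
        rw [if_neg (Nat.succ_ne_zero i), mul_pow]
        ring
    _ ≤ q * (1 - 2 * q)⁻¹ := by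
        apply mul_le_mul_of_nonneg_left _ hq0.le
        calc ∑ i ∈ Finset.range K, (2 * q) ^ i
            ≤ ∑' i : ℕ, (2 * q) ^ i :=
              Summable.sum_le_tsum _ (fun i _ => by positivity)
                (summable_geometric_of_lt_one h2q0 h2q1)
          _ = (1 - 2 * q)⁻¹ := tsum_geometric_of_lt_one h2q0 h2q1
    _ = q / (1 - 2 * q) := (div_eq_mul_inv q _).symm

/-- for `q ∈ (0, 1/2)`,
`Σ_{n=2}^∞ q^{σ_∞(n)} ≤ q(2−q)/(1−2q)` (with `q^∞ = 0`). -/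
theorem sigmaInf_generating_bound (q : ℝ) (hq0 : 0 < q) (hq : q < 1 / 2) :
    Summable (sigmaTerm q) ∧
      (∑' n : ℕ, sigmaTerm q n) ≤ q * (2 - q) / (1 - 2 * q) := by
  have hnn := sigmaTerm_nonneg hq0
  have hb : ∀ N : ℕ, ∑ i ∈ Finset.range N, sigmaTerm q i ≤ q / (1 - 2 * q) :=
    fun N => finset_sum_bound q hq0 hq (Finset.range N)
  have hfinal : q / (1 - 2 * q) ≤ q * (2 - q) / (1 - 2 * q) := by
    have h12 : (0 : ℝ) < 1 - 2 * q := by linarith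
    have key : (0 : ℝ) ≤ q * (1 - 2 * q) * (1 - q) :=
      mul_nonneg (mul_nonneg hq0.le h12.le) (by linarith)
    rw [div_le_div_iff₀ h12 h12]
    nlinarith [key]
  exact ⟨summable_of_sum_range_le hnn hb,
    (Real.tsum_le_of_sum_range_le hnn hb).trans hfinal⟩
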